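/- Let η, ν, c be real random variables on a probability space with ν = c·η almost surely and |η| ≤ M almost surely. Then E[|η|] ≤ (E[ν²])^{1/2} + √2·M·E[(c-1)²] + √2·(E[ν²])^{1/2}·(E[(c-1)²])^{1/2}. -/

import Mathlib

/-! The identity `η = ν - (c - 1) η` gives `|η| ≤ |η| |c - 1| + |ν|` and
`η² ≤ 2 M² (c - 1)² + 2 ν²` pointwise; Cauchy–Schwarz turns the first into
`E|η| ≤ ‖η‖₂ ‖c - 1‖₂ + ‖ν‖₂`, and the second bounds `‖η‖₂`. -/

open MeasureTheory

theorem Real.sqrt_add_le_add_sqrt {a b : ℝ} (ha : 0 ≤ a) (hb : 0 ≤ b) :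
    √(a + b) ≤ √a + √b := by
  rw [Real.sqrt_le_left (by positivity)]
  nlinarith [Real.sq_sqrt ha, Real.sq_sqrt hb, Real.sqrt_nonneg a, Real.sqrt_nonneg b]

section

variable {Ω : Type*} [MeasurableSpace Ω] {μ : Measure Ω}

theorem integral_abs_mul_abs_le_sqrt_mul_sqrt {f g : Ω → ℝ} (hf : MemLp f 2 μ)
    (hg : MemLp g 2 μ) :
    ∫ ω, |f ω| * |g ω| ∂μ ≤ √(∫ ω, f ω ^ 2 ∂μ) * √(∫ ω, g ω ^ 2 ∂μ) := by
  have h := integral_mul_norm_le_Lp_mul_Lq (μ := μ) Real.HolderConjugate.two_two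
    (by simpa using hf) (by simpa using hg)
  simpa only [Real.norm_eq_abs, Real.rpow_two, sq_abs, ← Real.sqrt_eq_rpow] using h

theorem integral_abs_le_sqrt_integral_sq [IsProbabilityMeasure μ] {f : Ω → ℝ}
    (hf : MemLp f 2 μ) : ∫ ω, |f ω| ∂μ ≤ √(∫ ω, f ω ^ 2 ∂μ) := by
  simpa using integral_abs_mul_abs_le_sqrt_mul_sqrt hf (memLp_const (1 : ℝ))

variable [IsFiniteMeasure μ] {η ν c : Ω → ℝ}

theorem integral_abs_le_of_eq_mul (hη : MemLp η 2 μ) (hν : MemLp ν 2 μ) (hc : MemLp c 2 μ)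
    (hfac : ∀ᵐ ω ∂μ, ν ω = c ω * η ω) :
    ∫ ω, |η ω| ∂μ ≤ ∫ ω, |η ω| * |c ω - 1| ∂μ + ∫ ω, |ν ω| ∂μ := by
  have hprod : Integrable (fun ω => |η ω| * |c ω - 1|) μ := by
    simpa only [Pi.mul_apply, Pi.sub_apply, abs_mul] using
      (hη.integrable_mul (hc.sub (memLp_const 1))).abs
  have hνint : Integrable (fun ω => |ν ω|) μ := (hν.integrable one_le_two).abs
  rw [← integral_add hprod hνint]
  refine integral_mono_of_nonneg (.of_forall fun ω => abs_nonneg _) (hprod.add hνint) ?_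
  filter_upwards [hfac] with ω hω
  calc |η ω| = |-(η ω * (c ω - 1)) + ν ω| := by rw [hω]; ring_nf
    _ ≤ |η ω| * |c ω - 1| + |ν ω| := by rw [← abs_mul, ← abs_neg (η ω * _)]; exact abs_add_le _ _

theorem integral_sq_le_of_eq_mul {M : ℝ} (hν : MemLp ν 2 μ) (hc : MemLp c 2 μ)
    (hbound : ∀ᵐ ω ∂μ, |η ω| ≤ M) (hfac : ∀ᵐ ω ∂μ, ν ω = c ω * η ω) :
    ∫ ω, η ω ^ 2 ∂μ ≤ 2 * M ^ 2 * ∫ ω, (c ω - 1) ^ 2 ∂μ + 2 * ∫ ω, ν ω ^ 2 ∂μ := by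
  have hc1 : Integrable (fun ω => 2 * M ^ 2 * (c ω - 1) ^ 2) μ :=
    (hc.sub (memLp_const 1)).integrable_sq.const_mul _
  have hν2 := hν.integrable_sq.const_mul 2
  rw [← integral_const_mul, ← integral_const_mul, ← integral_add hc1 hν2]
  refine integral_mono_of_nonneg (.of_forall fun ω => sq_nonneg _) (hc1.add hν2) ?_
  filter_upwards [hfac, hbound] with ω hω hM
  have hηM : η ω ^ 2 ≤ M ^ 2 := sq_le_sq' (abs_le.mp hM).1 (abs_le.mp hM).2
  have hsplit : η ω = ν ω - (c ω - 1) * η ω := by rw [hω]; ring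
  calc η ω ^ 2 = (ν ω - (c ω - 1) * η ω) ^ 2 := by rw [← hsplit]
    _ ≤ 2 * ((c ω - 1) ^ 2 * η ω ^ 2) + 2 * ν ω ^ 2 := by
      nlinarith [sq_nonneg (ν ω + (c ω - 1) * η ω)]
    _ ≤ 2 * M ^ 2 * (c ω - 1) ^ 2 + 2 * ν ω ^ 2 := by
      nlinarith [mul_le_mul_of_nonneg_left hηM (sq_nonneg (c ω - 1))]

theorem sqrt_integral_sq_le_of_eq_mul [NeZero μ] {M : ℝ} (hν : MemLp ν 2 μ)
    (hc : MemLp c 2 μ) (hbound : ∀ᵐ ω ∂μ, |η ω| ≤ M) (hfac : ∀ᵐ ω ∂μ, ν ω = c ω * η ω) :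
    √(∫ ω, η ω ^ 2 ∂μ) ≤
      √2 * M * √(∫ ω, (c ω - 1) ^ 2 ∂μ) + √2 * √(∫ ω, ν ω ^ 2 ∂μ) := by
  have hM : 0 ≤ M := hbound.exists.elim fun _ h => (abs_nonneg _).trans h
  have hA : 0 ≤ ∫ ω, (c ω - 1) ^ 2 ∂μ := integral_nonneg fun _ => sq_nonneg _
  have hV : 0 ≤ ∫ ω, ν ω ^ 2 ∂μ := integral_nonneg fun _ => sq_nonneg _
  calc √(∫ ω, η ω ^ 2 ∂μ)
      ≤ √(2 * M ^ 2 * ∫ ω, (c ω - 1) ^ 2 ∂μ + 2 * ∫ ω, ν ω ^ 2 ∂μ) :=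
        Real.sqrt_le_sqrt (integral_sq_le_of_eq_mul hν hc hbound hfac)
    _ ≤ √(2 * M ^ 2 * ∫ ω, (c ω - 1) ^ 2 ∂μ) + √(2 * ∫ ω, ν ω ^ 2 ∂μ) :=
        Real.sqrt_add_le_add_sqrt (by positivity) (by positivity)
    _ = √2 * M * √(∫ ω, (c ω - 1) ^ 2 ∂μ) + √2 * √(∫ ω, ν ω ^ 2 ∂μ) := by
        rw [Real.sqrt_mul (by positivity), Real.sqrt_mul (by positivity), Real.sqrt_mul zero_le_two,
          Real.sqrt_sq hM]

end

theorem stmt_9 {Ω : Type*} [MeasurableSpace Ω] (P : Measure Ω) [IsProbabilityMeasure P]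
    (η ν c : Ω → ℝ) (hη : MemLp η 2 P) (hν : MemLp ν 2 P) (hc : MemLp c 2 P)
    (M : ℝ) (hbound : ∀ᵐ ω ∂P, |η ω| ≤ M) (hfac : ∀ᵐ ω ∂P, ν ω = c ω * η ω) :
    ∫ ω, |η ω| ∂P ≤
      Real.sqrt (∫ ω, (ν ω) ^ 2 ∂P) +
        Real.sqrt 2 * M * (∫ ω, (c ω - 1) ^ 2 ∂P) +
        Real.sqrt 2 * Real.sqrt (∫ ω, (ν ω) ^ 2 ∂P) *
          Real.sqrt (∫ ω, (c ω - 1) ^ 2 ∂P) := by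
  set A := ∫ ω, (c ω - 1) ^ 2 ∂P
  set V := ∫ ω, ν ω ^ 2 ∂P
  have hA : √A * √A = A := Real.mul_self_sqrt (integral_nonneg fun _ => sq_nonneg _)
  calc ∫ ω, |η ω| ∂P
      ≤ ∫ ω, |η ω| * |c ω - 1| ∂P + ∫ ω, |ν ω| ∂P := integral_abs_le_of_eq_mul hη hν hc hfac
    _ ≤ √(∫ ω, η ω ^ 2 ∂P) * √A + √V :=
        add_le_add (integral_abs_mul_abs_le_sqrt_mul_sqrt hη (hc.sub (memLp_const 1)))
          (integral_abs_le_sqrt_integral_sq hν)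
    _ ≤ (√2 * M * √A + √2 * √V) * √A + √V := by
        gcongr
        exact sqrt_integral_sq_le_of_eq_mul hν hc hbound hfac
    _ = √V + √2 * M * A + √2 * √V * √A := by
        linear_combination (√2 * M) * hA
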